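/- arXiv:1109.1579 — 8 statements merged into one kernel-verified Lean document; each statement's English description precedes it below -/
import Mathlib

section
/- Let (V,d) be a finite metric space and S*, C nonempty subsets of V with |S*| ≤ k. Suppose every point of V is satisfied by C with respect to S* (d(C, x^{S*}) ≤ d(x,S*) for all x). Let T ⊆ C be obtained by choosing, for each y ∈ S*, a closest point of C to y. Then |T| ≤ k and for every x ∈ V, d(x, T) ≤ 2·d(x, S*) + d(x, C). -/
open Metric

theorem Metric.infDist_le_two_mul_of_dist_le {V : Type*} [PseudoMetricSpace V] {S T : Set V}
    {x y z : V} (hz : z ∈ T) (hy : dist x y = infDist x S) (hyz : dist y z ≤ infDist x S) :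
    infDist x T ≤ 2 * infDist x S :=
  calc infDist x T ≤ dist x z := infDist_le_dist_of_mem hz
    _ ≤ dist x y + dist y z := dist_triangle x y z
    _ ≤ 2 * infDist x S := by linarith

theorem stmt1_general {V : Type*} [MetricSpace V] [DecidableEq V]
    (Sstar C : Finset V) (k : ℕ)
    (hcard : Sstar.card ≤ k)
    (σ : V → V) (hσ : ∀ x, σ x ∈ Sstar ∧ dist x (σ x) = Metric.infDist x (Sstar : Set V))
    (hsat : ∀ x : V, Metric.infDist (σ x) (C : Set V) ≤ Metric.infDist x (Sstar : Set V))
    (τ : V → V) (hτ : ∀ y ∈ Sstar, τ y ∈ C ∧ dist y (τ y) = Metric.infDist y (C : Set V))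
    (T : Finset V) (hT : T = Sstar.image τ) :
    T.card ≤ k ∧ ∀ x : V,
      Metric.infDist x (T : Set V) ≤
        2 * Metric.infDist x (Sstar : Set V) + Metric.infDist x (C : Set V) := by
  subst hT
  refine ⟨Finset.card_image_le.trans hcard, fun x => ?_⟩
  obtain ⟨hσS, hσx⟩ := hσ x
  have hτT : τ (σ x) ∈ (Sstar.image τ : Set V) := by
    exact_mod_cast Finset.mem_image_of_mem τ hσS
  have hT := infDist_le_two_mul_of_dist_le hτT hσx ((hτ _ hσS).2 ▸ hsat x)
  linarith [infDist_nonneg (x := x) (s := (C : Set V))]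

/-- If every point of `V` is satisfied by `C` with respect to `S*` (with `|S*| ≤ k`), and
`T` is obtained by picking for each `y ∈ S*` a closest point of `C` to `y`, then `|T| ≤ k`
and `d(x,T) ≤ 2 d(x,S*) + d(x,C)` for all `x`. -/
theorem stmt1 {V : Type*} [MetricSpace V] [Fintype V] [DecidableEq V]
    (Sstar C : Finset V) (hS : Sstar.Nonempty) (hC : C.Nonempty) (k : ℕ)
    (hcard : Sstar.card ≤ k)
    (σ : V → V) (hσ : ∀ x, σ x ∈ Sstar ∧ dist x (σ x) = Metric.infDist x (Sstar : Set V))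
    (hsat : ∀ x : V, Metric.infDist (σ x) (C : Set V) ≤ Metric.infDist x (Sstar : Set V))
    (τ : V → V) (hτ : ∀ y ∈ Sstar, τ y ∈ C ∧ dist y (τ y) = Metric.infDist y (C : Set V))
    (T : Finset V) (hT : T = Sstar.image τ) :
    T.card ≤ k ∧ ∀ x : V,
      Metric.infDist x (T : Set V) ≤
        2 * Metric.infDist x (Sstar : Set V) + Metric.infDist x (C : Set V) :=
  stmt1_general Sstar C k hcard σ hσ hsat τ hτ T hT
end

section
/- Let (V,d) be a finite metric space, S*, C ⊆ V nonempty, and suppose every x ∈ V satisfies d(x,C) ≤ 2·max_{y∈V} d(y,S*). Let T ⊆ C be formed by picking for each point of S* a closest point in C. Then max_{x∈V} d(x,T) ≤ 4·max_{x∈V} d(x,S*). -/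
open Finset

theorem Metric.infDist_image_le_infDist_add {α : Type*} [PseudoMetricSpace α] {s : Set α}
    (hs : s.Nonempty) {f : α → α} {b : ℝ} (hf : ∀ y ∈ s, dist y (f y) ≤ b) (x : α) :
    infDist x (f '' s) ≤ infDist x s + b := by
  rw [← sub_le_iff_le_add, le_infDist hs]
  intro y hy
  have := infDist_le_dist_of_mem (x := x) (Set.mem_image_of_mem f hy)
  linarith [dist_triangle x y (f y), hf y hy]

theorem stmt2_general {V : Type*} [MetricSpace V] [Fintype V] [DecidableEq V] [Nonempty V]
    (Sstar C : Finset V) (hS : Sstar.Nonempty)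
    (hclose : ∀ x : V, Metric.infDist x (C : Set V) ≤
      2 * (univ.sup' univ_nonempty fun y => Metric.infDist y (Sstar : Set V)))
    (τ : V → V) (hτ : ∀ y ∈ Sstar, τ y ∈ C ∧ dist y (τ y) = Metric.infDist y (C : Set V))
    (T : Finset V) (hT : T = Sstar.image τ) :
    (univ.sup' univ_nonempty fun x => Metric.infDist x (T : Set V)) ≤
      4 * (univ.sup' univ_nonempty fun x => Metric.infDist x (Sstar : Set V)) := by
  set R := univ.sup' univ_nonempty fun y => Metric.infDist y (Sstar : Set V)
  have hR (x : V) : Metric.infDist x (Sstar : Set V) ≤ R :=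
    le_sup' (fun y => Metric.infDist y (Sstar : Set V)) (mem_univ x)
  have hτ_near (y : V) (hy : y ∈ (Sstar : Set V)) : dist y (τ y) ≤ 2 * R :=
    (hτ y hy).2 ▸ hclose y
  refine sup'_le _ _ fun x _ => ?_
  have hTx : Metric.infDist x (T : Set V) ≤ Metric.infDist x (Sstar : Set V) + 2 * R := by
    rw [hT, coe_image]
    exact Metric.infDist_image_le_infDist_add (coe_nonempty.mpr hS) hτ_near x
  linarith [hR x, Metric.infDist_nonneg (x := x) (s := (Sstar : Set V))]

/-- If every `x` has `d(x,C) ≤ 2·max_y d(y,S*)`, and `T ⊆ C` is formed by picking for each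
point of `S*` a closest point in `C`, then `max_x d(x,T) ≤ 4·max_x d(x,S*)`. -/
theorem stmt2 {V : Type*} [MetricSpace V] [Fintype V] [DecidableEq V] [Nonempty V]
    (Sstar C : Finset V) (hS : Sstar.Nonempty) (hC : C.Nonempty)
    (hclose : ∀ x : V, Metric.infDist x (C : Set V) ≤
      2 * (univ.sup' univ_nonempty fun y => Metric.infDist y (Sstar : Set V)))
    (τ : V → V) (hτ : ∀ y ∈ Sstar, τ y ∈ C ∧ dist y (τ y) = Metric.infDist y (C : Set V))
    (T : Finset V) (hT : T = Sstar.image τ) :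
    (univ.sup' univ_nonempty fun x => Metric.infDist x (T : Set V)) ≤
      4 * (univ.sup' univ_nonempty fun x => Metric.infDist x (Sstar : Set V)) :=
  stmt2_general Sstar C hS hclose τ hτ T hT
end

section
/- Let (V,d) be a finite metric space, k ≥ 1, and let OPT = min over S ⊆ V with |S| ≤ k of max_{x∈V} d(x,S) (the optimal k-center cost). Let C ⊆ V be nonempty and suppose max_{x∈V} d(x,C) ≤ 2·OPT. If A is an α-approximation for k-center restricted to C (i.e., A outputs S ⊆ C with |S| ≤ k and max_{x∈C} d(x,S) ≤ α · min over k-subsets S' of C of max_{x∈C} d(x,S')), then the output S of A satisfies max_{x∈V} d(x,S) ≤ (4α + 2)·OPT. -/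
/-!
Let `T` be an optimal `k`-center solution on `V`. Moving each center of `T` to a nearest point
of `C` costs at most `2·OPT`, so the relocated set is a feasible solution on `C` of cost at most
`3·OPT`; hence `S` covers `C` within `3α·OPT`. Every point of `V` lies within `2·OPT` of `C`,
so it lies within `(3α + 2)·OPT ≤ (4α + 2)·OPT` of `S`.
-/

open Finset Metric

section NearestPoint

variable {X : Type*} [PseudoMetricSpace X]

theorem Finset.exists_mem_infDist_eq_dist {C : Finset X} (hC : C.Nonempty) (x : X) :
    ∃ c ∈ C, infDist x (C : Set X) = dist x c := by
  simpa using C.finite_toSet.isCompact.exists_infDist_eq_dist (by simpa using hC) x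

theorem infDist_image_le_add [DecidableEq X] {T : Finset X} (hT : T.Nonempty) (g : X → X) {r : ℝ}
    (hg : ∀ s ∈ T, dist s (g s) ≤ r) (x : X) :
    infDist x (T.image g : Set X) ≤ infDist x (T : Set X) + r := by
  obtain ⟨s, hs, hxs⟩ := T.exists_mem_infDist_eq_dist hT x
  calc infDist x (T.image g : Set X)
      ≤ dist x (g s) := infDist_le_dist_of_mem (by simpa using ⟨s, hs, rfl⟩)
    _ ≤ dist x s + dist s (g s) := dist_triangle _ _ _
    _ ≤ infDist x (T : Set X) + r := by rw [hxs]; gcongr; exact hg s hs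

theorem infDist_le_add_of_forall_infDist_le {C : Finset X} (hC : C.Nonempty) {S : Set X}
    {β ρ : ℝ} (hCS : ∀ c ∈ C, infDist c S ≤ β) {x : X} (hx : infDist x (C : Set X) ≤ ρ) :
    infDist x S ≤ β + ρ := by
  obtain ⟨c, hc, hxc⟩ := C.exists_mem_infDist_eq_dist hC x
  calc infDist x S ≤ infDist c S + dist x c := infDist_le_infDist_add_dist
    _ ≤ β + ρ := by rw [← hxc]; gcongr; exact hCS c hc

end NearestPoint

theorem stmt3_general {V : Type*} [MetricSpace V] [Fintype V] [Nonempty V]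
    (k : ℕ) (α : ℝ) (hα : 1 ≤ α) (OPT : ℝ)
    (hOPT : IsLeast {r : ℝ | ∃ S : Finset V, S.Nonempty ∧ S.card ≤ k ∧
      r = univ.sup' univ_nonempty fun x => Metric.infDist x (S : Set V)} OPT)
    (C : Finset V) (hC : C.Nonempty)
    (hclose : ∀ x : V, Metric.infDist x (C : Set V) ≤ 2 * OPT)
    (S : Finset V)
    (happrox : ∀ S' : Finset V, S' ⊆ C → S'.Nonempty → S'.card ≤ k →
      (C.sup' hC fun x => Metric.infDist x (S : Set V)) ≤
        α * (C.sup' hC fun x => Metric.infDist x (S' : Set V))) :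
    ∀ x : V, Metric.infDist x (S : Set V) ≤ (4 * α + 2) * OPT := by
  classical
  obtain ⟨⟨T, hTne, hTcard, hOPT_eq⟩, -⟩ := hOPT
  have hT (x : V) : infDist x (T : Set V) ≤ OPT :=
    hOPT_eq ▸ le_sup' (fun x => infDist x (T : Set V)) (mem_univ x)
  have hOPT_nonneg : 0 ≤ OPT := infDist_nonneg.trans (hT (Classical.arbitrary V))
  choose g hgC hgd using C.exists_mem_infDist_eq_dist hC
  have hgT_sub : T.image g ⊆ C := image_subset_iff.2 fun s _ => hgC s
  have hgT_cost : C.sup' hC (fun x => infDist x (T.image g : Set V)) ≤ 3 * OPT :=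
    sup'_le _ _ fun x _ => by
      have := infDist_image_le_add hTne g (fun s _ => (hgd s).symm ▸ hclose s) x
      linarith [hT x]
  have hS_cost (c : V) (hc : c ∈ C) : infDist c (S : Set V) ≤ α * (3 * OPT) := calc
    infDist c (S : Set V) ≤ C.sup' hC fun x => infDist x (S : Set V) :=
      le_sup' (fun x => infDist x (S : Set V)) hc
    _ ≤ α * C.sup' hC (fun x => infDist x (T.image g : Set V)) :=
      happrox _ hgT_sub (hTne.image g) (card_image_le.trans hTcard)
    _ ≤ α * (3 * OPT) := by gcongr
  intro x
  calc infDist x (S : Set V) ≤ α * (3 * OPT) + 2 * OPT :=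
        infDist_le_add_of_forall_infDist_le hC hS_cost (hclose x)
    _ ≤ (4 * α + 2) * OPT := by nlinarith

/-- If `max_x d(x,C) ≤ 2·OPT` and `S` is an `α`-approximate `k`-center solution on `C`
(with centers from `C`), then `max_x d(x,S) ≤ (4α+2)·OPT`. -/
theorem stmt3 {V : Type*} [MetricSpace V] [Fintype V] [Nonempty V]
    (k : ℕ) (hk : 1 ≤ k) (α : ℝ) (hα : 1 ≤ α) (OPT : ℝ)
    (hOPT : IsLeast {r : ℝ | ∃ S : Finset V, S.Nonempty ∧ S.card ≤ k ∧
      r = univ.sup' univ_nonempty fun x => Metric.infDist x (S : Set V)} OPT)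
    (C : Finset V) (hC : C.Nonempty)
    (hclose : ∀ x : V, Metric.infDist x (C : Set V) ≤ 2 * OPT)
    (S : Finset V) (hSC : S ⊆ C) (hSne : S.Nonempty) (hScard : S.card ≤ k)
    (happrox : ∀ S' : Finset V, S' ⊆ C → S'.Nonempty → S'.card ≤ k →
      (C.sup' hC fun x => Metric.infDist x (S : Set V)) ≤
        α * (C.sup' hC fun x => Metric.infDist x (S' : Set V))) :
    ∀ x : V, Metric.infDist x (S : Set V) ≤ (4 * α + 2) * OPT :=
  stmt3_general k α hα OPT hOPT C hC hclose S happrox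
end

section
/- Let (V,d) be a finite metric space, S* ⊆ V with |S*| ≤ k, and C ⊆ V. Let U be the set of points unsatisfied by C with respect to S*. Suppose there is an injective map p : U → V \ U with d(p(x), S*) ≥ d(x, C) for all x ∈ U. Then Σ_{x∈V} d(x,C) ≤ 3·Σ_{x∈V} d(x,S*). -/
/-!
A point `x` satisfied by `C` has `d(x, C) ≤ d(x, x^{S*}) + d(x^{S*}, C) ≤ 2 d(x, S*)`.
An unsatisfied point `x` is charged to its proxy `p x`, a satisfied point with
`d(x, C) ≤ d(p x, S*)`; injectivity means each satisfied point is charged at most once,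
so the unsatisfied points contribute at most `Σ_x d(x, S*)` in total.
-/

open Finset

theorem Metric.infDist_le_two_mul_of_infDist_le {X : Type*} [PseudoMetricSpace X]
    {s t : Set X} {x y : X} (hxy : dist x y = Metric.infDist x t)
    (hy : Metric.infDist y s ≤ Metric.infDist x t) :
    Metric.infDist x s ≤ 2 * Metric.infDist x t := by
  have := Metric.infDist_le_infDist_add_dist (x := x) (y := y) (s := s)
  linarith

theorem Finset.sum_le_sum_of_injOn_of_le_comp {ι κ : Type*} {s : Finset ι} {t : Finset κ}
    {f : ι → ℝ} {g : κ → ℝ} (p : ι → κ) (hinj : Set.InjOn p s) (hmaps : Set.MapsTo p s t)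
    (hg : ∀ y ∈ t, 0 ≤ g y) (hle : ∀ x ∈ s, f x ≤ g (p x)) :
    ∑ x ∈ s, f x ≤ ∑ y ∈ t, g y := by
  classical
  calc ∑ x ∈ s, f x ≤ ∑ x ∈ s, g (p x) := sum_le_sum hle
    _ = ∑ y ∈ s.image p, g y := (sum_image hinj).symm
    _ ≤ ∑ y ∈ t, g y :=
      sum_le_sum_of_subset_of_nonneg (image_subset_iff.mpr hmaps) fun y hy _ ↦ hg y hy

theorem stmt4_general {V : Type*} [MetricSpace V] [Fintype V]
    (Sstar C : Finset V)
    (σ : V → V) (hσ : ∀ x, σ x ∈ Sstar ∧ dist x (σ x) = Metric.infDist x (Sstar : Set V))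
    (U : Finset V)
    (hU : ∀ x : V, x ∈ U ↔
      ¬ Metric.infDist (σ x) (C : Set V) ≤ Metric.infDist x (Sstar : Set V))
    (p : V → V) (hpinj : Set.InjOn p (U : Set V))
    (hpmaps : ∀ x ∈ U, p x ∉ U)
    (hpdist : ∀ x ∈ U, Metric.infDist x (C : Set V) ≤ Metric.infDist (p x) (Sstar : Set V)) :
    ∑ x : V, Metric.infDist x (C : Set V) ≤ 3 * ∑ x : V, Metric.infDist x (Sstar : Set V) := by
  classical
  set dC := fun x ↦ Metric.infDist x (C : Set V)
  set dS := fun x ↦ Metric.infDist x (Sstar : Set V)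
  have hsat : ∑ x ∈ Uᶜ, dC x ≤ 2 * ∑ x ∈ Uᶜ, dS x := by
    rw [mul_sum]
    refine sum_le_sum fun x hx ↦ Metric.infDist_le_two_mul_of_infDist_le (hσ x).2 ?_
    simpa [hU] using hx
  have hunsat : ∑ x ∈ U, dC x ≤ ∑ x ∈ Uᶜ, dS x :=
    sum_le_sum_of_injOn_of_le_comp p hpinj (fun x hx ↦ by simpa using hpmaps x hx)
      (fun _ _ ↦ Metric.infDist_nonneg) hpdist
  calc ∑ x, dC x = ∑ x ∈ U, dC x + ∑ x ∈ Uᶜ, dC x := (sum_add_sum_compl U dC).symm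
    _ ≤ 3 * ∑ x ∈ Uᶜ, dS x := by linarith
    _ ≤ 3 * ∑ x, dS x :=
      mul_le_mul_of_nonneg_left (sum_le_univ_sum_of_nonneg fun _ ↦ Metric.infDist_nonneg)
        zero_le_three

/-- If the unsatisfied points `U` admit an injective proxy map `p : U → V \ U` with
`d(p(x),S*) ≥ d(x,C)`, then `Σ_x d(x,C) ≤ 3·Σ_x d(x,S*)`. -/
theorem stmt4 {V : Type*} [MetricSpace V] [Fintype V]
    (Sstar C : Finset V) (hS : Sstar.Nonempty) (hC : C.Nonempty)
    (k : ℕ) (hcard : Sstar.card ≤ k)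
    (σ : V → V) (hσ : ∀ x, σ x ∈ Sstar ∧ dist x (σ x) = Metric.infDist x (Sstar : Set V))
    (U : Finset V)
    (hU : ∀ x : V, x ∈ U ↔
      ¬ Metric.infDist (σ x) (C : Set V) ≤ Metric.infDist x (Sstar : Set V))
    (p : V → V) (hpinj : Set.InjOn p (U : Set V))
    (hpmaps : ∀ x ∈ U, p x ∉ U)
    (hpdist : ∀ x ∈ U, Metric.infDist x (C : Set V) ≤ Metric.infDist (p x) (Sstar : Set V)) :
    ∑ x : V, Metric.infDist x (C : Set V) ≤ 3 * ∑ x : V, Metric.infDist x (Sstar : Set V) :=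
  stmt4_general Sstar C σ hσ U hU p hpinj hpmaps hpdist
end

section
/- Let (V,d) be a finite metric space, k ≥ 1, and OPT = min over k-subsets S of V of Σ_{x∈V} d(x,S) (optimal k-median cost). Let C ⊆ V be nonempty with Σ_{x∈V} d(x,C) ≤ 3·OPT. Then the optimal k-median cost restricted to choosing centers from C, i.e., min over S ⊆ C with |S| ≤ k of Σ_{x∈V} d(x,S), is at most 5·OPT. -/
/-! Send each optimal center to a nearest point of `C`. By the triangle inequality, a point's
distance to the moved centers is at most twice its distance to the optimal ones plus its
distance to `C`, so the cost is at most `2·OPT + 3·OPT`. -/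

open Metric Finset

section

variable {α : Type*} [PseudoMetricSpace α]

theorem infDist_image_le_two_mul_add {S C : Set α} (hS : IsCompact S) (hSne : S.Nonempty)
    {f : α → α} (hf : ∀ s ∈ S, dist s (f s) ≤ infDist s C) (x : α) :
    infDist x (f '' S) ≤ 2 * infDist x S + infDist x C := by
  obtain ⟨s, hs, hxs⟩ := hS.exists_infDist_eq_dist hSne x
  calc infDist x (f '' S) ≤ dist x (f s) := infDist_le_dist_of_mem (Set.mem_image_of_mem f hs)
    _ ≤ dist x s + dist s (f s) := dist_triangle _ _ _
    _ ≤ dist x s + (infDist x C + dist s x) := by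
        gcongr
        exact (hf s hs).trans infDist_le_infDist_add_dist
    _ = 2 * infDist x S + infDist x C := by rw [hxs, dist_comm s x]; ring

theorem Finset.exists_forall_mem_dist_eq_infDist (C : Finset α) (hC : C.Nonempty) :
    ∃ f : α → α, ∀ y, f y ∈ C ∧ dist y (f y) = infDist y (C : Set α) := by
  choose f hf using fun y => C.finite_toSet.isCompact.exists_infDist_eq_dist (coe_nonempty.2 hC) y
  exact ⟨f, fun y => ⟨(hf y).1, (hf y).2.symm⟩⟩

end

theorem stmt5_general {V : Type*} [MetricSpace V] [Fintype V]
    (k : ℕ) (OPT : ℝ)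
    (hOPT : IsLeast {r : ℝ | ∃ S : Finset V, S.Nonempty ∧ S.card ≤ k ∧
      r = ∑ x : V, Metric.infDist x (S : Set V)} OPT)
    (C : Finset V) (hC : C.Nonempty)
    (hclose : ∑ x : V, Metric.infDist x (C : Set V) ≤ 3 * OPT) :
    ∃ S : Finset V, S ⊆ C ∧ S.Nonempty ∧ S.card ≤ k ∧
      ∑ x : V, Metric.infDist x (S : Set V) ≤ 5 * OPT := by
  classical
  obtain ⟨⟨S, hSne, hScard, rfl⟩, -⟩ := hOPT
  obtain ⟨f, hf⟩ := C.exists_forall_mem_dist_eq_infDist hC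
  refine ⟨S.image f, fun c hc => ?_, hSne.image f, card_image_le.trans hScard, ?_⟩
  · obtain ⟨s, -, rfl⟩ := mem_image.1 hc
    exact (hf s).1
  have hcost (x : V) := infDist_image_le_two_mul_add S.finite_toSet.isCompact
    (coe_nonempty.2 hSne) (fun s _ => (hf s).2.le) x
  calc ∑ x, infDist x (S.image f : Set V)
      ≤ ∑ x, (2 * infDist x (S : Set V) + infDist x (C : Set V)) :=
        sum_le_sum fun x _ => by rw [coe_image]; exact hcost x
    _ = 2 * ∑ x, infDist x (S : Set V) + ∑ x, infDist x (C : Set V) := by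
        rw [sum_add_distrib, mul_sum]
    _ ≤ 5 * ∑ x, infDist x (S : Set V) := by linarith

/-- If `Σ_x d(x,C) ≤ 3·OPT`, then the optimal `k`-median cost with centers restricted
to `C` is at most `5·OPT`. -/
theorem stmt5 {V : Type*} [MetricSpace V] [Fintype V] [Nonempty V]
    (k : ℕ) (hk : 1 ≤ k) (OPT : ℝ)
    (hOPT : IsLeast {r : ℝ | ∃ S : Finset V, S.Nonempty ∧ S.card ≤ k ∧
      r = ∑ x : V, Metric.infDist x (S : Set V)} OPT)
    (C : Finset V) (hC : C.Nonempty)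
    (hclose : ∑ x : V, Metric.infDist x (C : Set V) ≤ 3 * OPT) :
    ∃ S : Finset V, S ⊆ C ∧ S.Nonempty ∧ S.card ≤ k ∧
      ∑ x : V, Metric.infDist x (S : Set V) ≤ 5 * OPT :=
  stmt5_general k OPT hOPT C hC hclose
end

section
/- Let (V,d) be a finite metric space and C ⊆ V nonempty. For each y ∈ C define the weight w(y) = |{x ∈ V \ C : the chosen closest point of C to x equals y}| + 1, where each x ∈ V \ C is assigned to a unique closest point x^C ∈ C. Then for any nonempty T* ⊆ C: Σ_{y∈C} w(y)·d(y,T*) ≤ 2·Σ_{x∈V} d(x,T*). In particular, the optimal weighted k-median cost on (C,w) with centers from C is at most twice the optimal k-median cost on V with centers restricted to C. -/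
/-!
A point `x ∉ C` is charged to its closest point `x^C ∈ C`, and for `T ⊆ C`,
`d(x^C, T) ≤ d(x, x^C) + d(x, T) ≤ 2 d(x, T)` because `d(x, x^C) = d(x, C) ≤ d(x, T)`.
Summing over the fibres of `x ↦ x^C` accounts for the counting part of the weights, and the
remaining `+1` in each weight is the term `d(y, T) ≤ 2 d(y, T)` of the point `y ∈ C` itself.
-/

open Finset Metric

theorem Metric.infDist_le_two_mul_infDist_of_dist_eq_infDist {V : Type*} [PseudoMetricSpace V]
    {C T : Set V} {x c : V} (hxc : dist x c = infDist x C) (hTC : T ⊆ C) (hT : T.Nonempty) :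
    infDist c T ≤ 2 * infDist x T := by
  have hCT : infDist x C ≤ infDist x T := infDist_le_infDist_of_subset hTC hT
  calc infDist c T ≤ infDist x T + dist c x := infDist_le_infDist_add_dist
    _ ≤ 2 * infDist x T := by rw [dist_comm, hxc]; linarith

theorem Finset.sum_fiber_card_add_one_mul_infDist_le {V : Type*} [PseudoMetricSpace V]
    [Fintype V] [DecidableEq V] (C T : Finset V) (xc : V → V)
    (hxc : ∀ x, xc x ∈ C ∧ dist x (xc x) = infDist x (C : Set V))
    (hTC : T ⊆ C) (hT : T.Nonempty) :
    ∑ y ∈ C, ((#{x ∈ univ \ C | xc x = y} + 1 : ℕ) : ℝ) * infDist y (T : Set V) ≤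
      2 * ∑ x, infDist x (T : Set V) := by
  have hfibres : ∑ y ∈ C, (#{x ∈ univ \ C | xc x = y} : ℝ) * infDist y (T : Set V) =
      ∑ x ∈ univ \ C, infDist (xc x) (T : Set V) := by
    rw [← sum_fiberwise_of_maps_to' (fun x _ ↦ (hxc x).1) (infDist · (T : Set V))]
    simp only [sum_const, nsmul_eq_mul]
  calc ∑ y ∈ C, ((#{x ∈ univ \ C | xc x = y} + 1 : ℕ) : ℝ) * infDist y (T : Set V)
      = ∑ x ∈ univ \ C, infDist (xc x) (T : Set V) + ∑ y ∈ C, infDist y (T : Set V) := by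
        simp only [Nat.cast_add, Nat.cast_one, add_mul, one_mul, sum_add_distrib, hfibres]
    _ ≤ ∑ x ∈ univ \ C, 2 * infDist x (T : Set V) + ∑ y ∈ C, 2 * infDist y (T : Set V) := by
        gcongr with x _ y _
        · exact infDist_le_two_mul_infDist_of_dist_eq_infDist (hxc x).2
            (by exact_mod_cast hTC) (by exact_mod_cast hT)
        · linarith [infDist_nonneg (x := y) (s := (T : Set V))]
    _ = 2 * ∑ x, infDist x (T : Set V) := by
        rw [← mul_sum, ← mul_sum, ← mul_add, sum_sdiff (subset_univ C)]

theorem stmt6_general {V : Type*} [MetricSpace V] [Fintype V] [DecidableEq V]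
    (C : Finset V)
    (xc : V → V) (hxc : ∀ x, xc x ∈ C ∧ dist x (xc x) = Metric.infDist x (C : Set V))
    (w : V → ℕ)
    (hw : ∀ y ∈ C, w y = ((univ \ C).filter fun x => xc x = y).card + 1) :
    (∀ Tstar : Finset V, Tstar ⊆ C → Tstar.Nonempty →
      ∑ y ∈ C, (w y : ℝ) * Metric.infDist y (Tstar : Set V) ≤
        2 * ∑ x : V, Metric.infDist x (Tstar : Set V)) ∧
    (∀ k : ℕ, 1 ≤ k → ∀ OPTC : ℝ,
      IsLeast {r : ℝ | ∃ S : Finset V, S ⊆ C ∧ S.Nonempty ∧ S.card ≤ k ∧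
        r = ∑ x : V, Metric.infDist x (S : Set V)} OPTC →
      ∃ S : Finset V, S ⊆ C ∧ S.Nonempty ∧ S.card ≤ k ∧
        ∑ y ∈ C, (w y : ℝ) * Metric.infDist y (S : Set V) ≤ 2 * OPTC) := by
  have weighted_le : ∀ T : Finset V, T ⊆ C → T.Nonempty →
      ∑ y ∈ C, (w y : ℝ) * infDist y (T : Set V) ≤ 2 * ∑ x, infDist x (T : Set V) := by
    intro T hTC hT
    rw [sum_congr rfl fun y hy ↦ by rw [hw y hy]]
    exact sum_fiber_card_add_one_mul_infDist_le C T xc hxc hTC hT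
  refine ⟨weighted_le, fun k _ OPTC hOPT ↦ ?_⟩
  obtain ⟨S, hSC, hS, hSk, rfl⟩ := hOPT.1
  exact ⟨S, hSC, hS, hSk, weighted_le S hSC hS⟩

/-- With weights `w(y) = |{x ∈ V \ C : x^C = y}| + 1`, for any nonempty `T* ⊆ C` we have
`Σ_{y∈C} w(y)·d(y,T*) ≤ 2·Σ_{x∈V} d(x,T*)`; in particular the optimal weighted `k`-median
cost on `(C,w)` is at most twice the optimal `k`-median cost on `V` with centers from `C`. -/
theorem stmt6 {V : Type*} [MetricSpace V] [Fintype V] [DecidableEq V]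
    (C : Finset V) (hC : C.Nonempty)
    (xc : V → V) (hxc : ∀ x, xc x ∈ C ∧ dist x (xc x) = Metric.infDist x (C : Set V))
    (w : V → ℕ)
    (hw : ∀ y ∈ C, w y = ((univ \ C).filter fun x => xc x = y).card + 1) :
    (∀ Tstar : Finset V, Tstar ⊆ C → Tstar.Nonempty →
      ∑ y ∈ C, (w y : ℝ) * Metric.infDist y (Tstar : Set V) ≤
        2 * ∑ x : V, Metric.infDist x (Tstar : Set V)) ∧
    (∀ k : ℕ, 1 ≤ k → ∀ OPTC : ℝ,
      IsLeast {r : ℝ | ∃ S : Finset V, S ⊆ C ∧ S.Nonempty ∧ S.card ≤ k ∧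
        r = ∑ x : V, Metric.infDist x (S : Set V)} OPTC →
      ∃ S : Finset V, S ⊆ C ∧ S.Nonempty ∧ S.card ≤ k ∧
        ∑ y ∈ C, (w y : ℝ) * Metric.infDist y (S : Set V) ≤ 2 * OPTC) :=
  stmt6_general C xc hxc w hw
end

section
/- Let (V,d) be a finite metric space, k ≥ 1, OPT the optimal k-median cost on V, and C ⊆ V with Σ_{x∈V} d(x,C) ≤ 3·OPT. Define weights w(y) = |{x ∈ V\C : x^C = y}| + 1 for y ∈ C. If S ⊆ C with |S| ≤ k satisfies Σ_{y∈C} w(y)·d(y,S) ≤ α · (min over k-subsets S' of C of Σ_{y∈C} w(y) d(y,S')), then Σ_{x∈V} d(x,S) ≤ (10α + 3)·OPT. -/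
/-!
Snapping each point `x` to its nearest point `xc x ∈ C` moves it by `d(x, C)`, and `infDist · A`
is 1-Lipschitz, so snapping changes the cost of any center set by at most `Σ d(x, C) ≤ 3·OPT`.
Since `C` is fixed by the snapping and `w y` counts the points snapped to `y`, the weighted cost
on `(C, w)` is exactly the cost of the snapped points. Moving an optimal `T` to `xc '' T ⊆ C` at
most doubles distances from points of `C`, so the weighted optimum is at most
`2·(OPT + 3·OPT) = 8·OPT`, and `Σ d(x, S) ≤ 8α·OPT + 3·OPT`.
-/

open Finset Metric

theorem Finset.sum_natCast_mul_eq_sum_comp {ι R : Type*} [Fintype ι] [DecidableEq ι]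
    [NonAssocSemiring R] {t : Finset ι} {p : ι → ι} (hmaps : ∀ x, p x ∈ t)
    (hfix : ∀ y ∈ t, p y = y) {w : ι → ℕ} (hw : ∀ y ∈ t, w y = #{x ∈ univ \ t | p x = y} + 1)
    (f : ι → R) : ∑ y ∈ t, (w y : R) * f y = ∑ x, f (p x) := by
  have hfibers : ∑ x ∈ univ \ t, f (p x) = ∑ y ∈ t, (#{x ∈ univ \ t | p x = y} : R) * f y := by
    rw [← sum_fiberwise_of_maps_to fun x _ => hmaps x]
    refine sum_congr rfl fun y _ => ?_
    rw [sum_congr rfl fun x hx => by rw [(mem_filter.1 hx).2], sum_const, nsmul_eq_mul]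
  have hfixed : ∑ x ∈ t, f (p x) = ∑ y ∈ t, f y := sum_congr rfl fun y hy => by rw [hfix y hy]
  rw [← sum_add_sum_compl t, compl_eq_univ_sdiff, hfibers, hfixed, ← sum_add_distrib]
  refine sum_congr rfl fun y hy => ?_
  rw [hw y hy, Nat.cast_add_one, add_mul, one_mul, add_comm]

theorem Metric.abs_sum_infDist_sub_sum_infDist_comp_le {ι V : Type*} [PseudoMetricSpace V]
    (s : Finset ι) (A : Set V) (q p : ι → V) :
    |∑ i ∈ s, infDist (q i) A - ∑ i ∈ s, infDist (p i) A| ≤ ∑ i ∈ s, dist (q i) (p i) := by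
  rw [← sum_sub_distrib]
  refine (abs_sum_le_sum_abs _ _).trans (sum_le_sum fun i _ => ?_)
  simpa [Real.dist_eq] using (lipschitz_infDist_pt A).dist_le_mul (q i) (p i)

theorem Metric.infDist_image_le_two_mul {V : Type*} [PseudoMetricSpace V] {C A : Set V}
    {p : V → V} (hp : ∀ x, dist x (p x) ≤ infDist x C) {y : V} (hy : y ∈ C) (hA : A.Nonempty) :
    infDist y (p '' A) ≤ 2 * infDist y A := by
  have : infDist y (p '' A) / 2 ≤ infDist y A := (le_infDist hA).2 fun a ha => by
    have hya := infDist_le_dist_of_mem (x := y) (Set.mem_image_of_mem p ha)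
    have hsnap := (hp a).trans (infDist_le_dist_of_mem (x := a) hy)
    linarith [dist_triangle y a (p a), dist_comm a y]
  linarith

theorem stmt8_general {V : Type*} [MetricSpace V] [Fintype V] [DecidableEq V]
    (k : ℕ) (α : ℝ) (hα : 1 ≤ α) (OPT : ℝ)
    (hOPT : IsLeast {r : ℝ | ∃ S : Finset V, S.Nonempty ∧ S.card ≤ k ∧
      r = ∑ x : V, Metric.infDist x (S : Set V)} OPT)
    (C : Finset V)
    (hclose : ∑ x : V, Metric.infDist x (C : Set V) ≤ 3 * OPT)
    (xc : V → V) (hxc : ∀ x, xc x ∈ C ∧ dist x (xc x) = Metric.infDist x (C : Set V))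
    (w : V → ℕ)
    (hw : ∀ y ∈ C, w y = ((univ \ C).filter fun x => xc x = y).card + 1)
    (S : Finset V)
    (happrox : ∀ S' : Finset V, S' ⊆ C → S'.Nonempty → S'.card ≤ k →
      ∑ y ∈ C, (w y : ℝ) * Metric.infDist y (S : Set V) ≤
        α * ∑ y ∈ C, (w y : ℝ) * Metric.infDist y (S' : Set V)) :
    ∑ x : V, Metric.infDist x (S : Set V) ≤ (10 * α + 3) * OPT := by
  obtain ⟨⟨T, hT, hTcard, rfl⟩, -⟩ := hOPT
  have hsnap (x : V) : dist x (xc x) ≤ infDist x C := (hxc x).2.le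
  have hfix (y : V) (hy : y ∈ C) : xc y = y :=
    (dist_le_zero.1 <| (hsnap y).trans (infDist_zero_of_mem (mem_coe.2 hy)).le).symm
  have hweighted (A : Set V) : ∑ y ∈ C, (w y : ℝ) * infDist y A = ∑ x, infDist (xc x) A :=
    sum_natCast_mul_eq_sum_comp (fun x => (hxc x).1) hfix hw _
  have hmove (A : Set V) : |∑ x, infDist x A - ∑ x, infDist (xc x) A| ≤ ∑ x, infDist x C :=
    (abs_sum_infDist_sub_sum_infDist_comp_le univ A (fun x => x) xc).trans
      (sum_le_sum fun x _ => hsnap x)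
  have hdouble : ∑ y ∈ C, (w y : ℝ) * infDist y (T.image xc : Set V) ≤
      2 * ∑ y ∈ C, (w y : ℝ) * infDist y T := by
    rw [mul_sum]
    refine sum_le_sum fun y hy => ?_
    rw [coe_image, mul_left_comm]
    exact mul_le_mul_of_nonneg_left
      (infDist_image_le_two_mul hsnap hy (coe_nonempty.2 hT)) (by positivity)
  have hTweighted : ∑ y ∈ C, (w y : ℝ) * infDist y T ≤ 4 * ∑ x, infDist x (T : Set V) := by
    linarith [hweighted T, (abs_le.1 (hmove T)).1]
  have hS := happrox (T.image xc) (image_subset_iff.2 fun x _ => (hxc x).1) (hT.image xc)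
    (card_image_le.trans hTcard)
  have hOPT : 0 ≤ ∑ x, infDist x (T : Set V) := sum_nonneg fun _ _ => infDist_nonneg
  calc ∑ x, infDist x (S : Set V)
      ≤ ∑ y ∈ C, (w y : ℝ) * infDist y S + ∑ x, infDist x (C : Set V) := by
        linarith [hweighted S, (abs_le.1 (hmove S)).2]
    _ ≤ α * (2 * (4 * ∑ x, infDist x (T : Set V))) + 3 * ∑ x, infDist x (T : Set V) := by
        gcongr
        exact hS.trans (by gcongr; linarith)
    _ ≤ (10 * α + 3) * ∑ x, infDist x (T : Set V) := by nlinarith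

/-- If `Σ_x d(x,C) ≤ 3·OPT` and `S ⊆ C` is an `α`-approximate solution for the weighted
`k`-median instance `(C,w)`, then `Σ_x d(x,S) ≤ (10α+3)·OPT`. -/
theorem stmt8 {V : Type*} [MetricSpace V] [Fintype V] [DecidableEq V] [Nonempty V]
    (k : ℕ) (hk : 1 ≤ k) (α : ℝ) (hα : 1 ≤ α) (OPT : ℝ)
    (hOPT : IsLeast {r : ℝ | ∃ S : Finset V, S.Nonempty ∧ S.card ≤ k ∧
      r = ∑ x : V, Metric.infDist x (S : Set V)} OPT)
    (C : Finset V) (hC : C.Nonempty)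
    (hclose : ∑ x : V, Metric.infDist x (C : Set V) ≤ 3 * OPT)
    (xc : V → V) (hxc : ∀ x, xc x ∈ C ∧ dist x (xc x) = Metric.infDist x (C : Set V))
    (w : V → ℕ)
    (hw : ∀ y ∈ C, w y = ((univ \ C).filter fun x => xc x = y).card + 1)
    (S : Finset V) (hSC : S ⊆ C) (hSne : S.Nonempty) (hScard : S.card ≤ k)
    (happrox : ∀ S' : Finset V, S' ⊆ C → S'.Nonempty → S'.card ≤ k →
      ∑ y ∈ C, (w y : ℝ) * Metric.infDist y (S : Set V) ≤
        α * ∑ y ∈ C, (w y : ℝ) * Metric.infDist y (S' : Set V)) :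
    ∑ x : V, Metric.infDist x (S : Set V) ≤ (10 * α + 3) * OPT :=
  stmt8_general k α hα OPT hOPT C hclose xc hxc w hw S happrox
end

section
/- Let (V,d) be a finite metric space partitioned into disjoint nonempty sets S_1, …, S_ℓ, and let k ≥ 1. For each i, let OPT_i = min over subsets T ⊆ S_i with |T| ≤ k of Σ_{x∈S_i} d(x,T), and let OPT = min over subsets T ⊆ V with |T| ≤ k of Σ_{x∈V} d(x,T). Then Σ_{i=1}^ℓ OPT_i ≤ 2·OPT. -/
/-!
Fix an optimal global set of centers `T`. Inside a part `S`, replace every center `t ∈ T` by a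
point `π t ∈ S` nearest to it. For `x ∈ S` served by `t`, we have `d(t, π t) ≤ d(t, x)`, so
`d(x, π t) ≤ d(x, t) + d(t, π t) ≤ 2 d(x, t)`: the projected centers serve `S` at no more than
twice the cost `T` does. Summing over the parts, which partition `V`, gives `∑ OPT_i ≤ 2 OPT`.
-/

open Finset Metric

section

variable {V : Type*} [PseudoMetricSpace V]

theorem exists_nearestPoint_map {S : Finset V} (hS : S.Nonempty) :
    ∃ π : V → V, ∀ t, π t ∈ S ∧ ∀ x ∈ S, dist t (π t) ≤ dist t x := by
  choose π hπS hπmin using fun t : V => S.exists_min_image (dist t) hS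
  exact ⟨π, fun t => ⟨hπS t, hπmin t⟩⟩

theorem infDist_image_le_two_mul_infDist [DecidableEq V] {S T : Finset V} {π : V → V}
    (hπ : ∀ t, ∀ x ∈ S, dist t (π t) ≤ dist t x) (hT : T.Nonempty) {x : V} (hx : x ∈ S) :
    infDist x (T.image π : Set V) ≤ 2 * infDist x (T : Set V) := by
  obtain ⟨t, htT, hxt⟩ := T.finite_toSet.isCompact.exists_infDist_eq_dist (by exact_mod_cast hT) x
  calc infDist x (T.image π : Set V)
      ≤ dist x (π t) := infDist_le_dist_of_mem (by simpa using ⟨t, htT, rfl⟩)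
    _ ≤ dist x t + dist t (π t) := dist_triangle _ _ _
    _ ≤ dist x t + dist t x := by gcongr; exact hπ t x hx
    _ = 2 * infDist x (T : Set V) := by rw [hxt, dist_comm t x]; ring

theorem exists_subset_sum_infDist_le_two_mul [DecidableEq V] {S T : Finset V}
    (hS : S.Nonempty) (hT : T.Nonempty) :
    ∃ T' ⊆ S, T'.Nonempty ∧ T'.card ≤ T.card ∧
      ∑ x ∈ S, infDist x (T' : Set V) ≤ 2 * ∑ x ∈ S, infDist x (T : Set V) := by
  obtain ⟨π, hπ⟩ := exists_nearestPoint_map hS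
  refine ⟨T.image π, image_subset_iff.2 fun t _ => (hπ t).1, hT.image π, card_image_le, ?_⟩
  rw [mul_sum]
  exact sum_le_sum fun x hx =>
    infDist_image_le_two_mul_infDist (fun t => (hπ t).2) hT hx

end

theorem stmt9_general {V : Type*} [MetricSpace V] [Fintype V] [DecidableEq V]
    (ℓ k : ℕ)
    (P : Fin ℓ → Finset V) (hne : ∀ i, (P i).Nonempty)
    (hdisj : ∀ i j, i ≠ j → Disjoint (P i) (P j))
    (hcover : univ.biUnion P = univ)
    (OPTi : Fin ℓ → ℝ)
    (hOPTi : ∀ i, IsLeast {r : ℝ | ∃ T : Finset V, T ⊆ P i ∧ T.Nonempty ∧ T.card ≤ k ∧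
      r = ∑ x ∈ P i, Metric.infDist x (T : Set V)} (OPTi i))
    (OPT : ℝ)
    (hOPT : IsLeast {r : ℝ | ∃ T : Finset V, T.Nonempty ∧ T.card ≤ k ∧
      r = ∑ x : V, Metric.infDist x (T : Set V)} OPT) :
    ∑ i, OPTi i ≤ 2 * OPT := by
  obtain ⟨⟨T, hT, hTk, rfl⟩, -⟩ := hOPT
  have hpart (i : Fin ℓ) : OPTi i ≤ 2 * ∑ x ∈ P i, infDist x (T : Set V) := by
    obtain ⟨T', hT'S, hT', hcard, hcost⟩ := exists_subset_sum_infDist_le_two_mul (hne i) hT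
    exact ((hOPTi i).2 ⟨T', hT'S, hT', hcard.trans hTk, rfl⟩).trans hcost
  calc ∑ i, OPTi i ≤ ∑ i, 2 * ∑ x ∈ P i, infDist x (T : Set V) := sum_le_sum fun i _ => hpart i
    _ = 2 * ∑ x, infDist x (T : Set V) := by
      rw [← mul_sum, ← sum_biUnion fun i _ j _ hij => hdisj i j hij, hcover]

/-- (Guha et al., Theorem 2.2) For any partition of `V` into nonempty parts `S_1,…,S_ℓ`,
the sum of the per-part optimal `k`-median costs is at most twice the global optimum. -/
theorem stmt9 {V : Type*} [MetricSpace V] [Fintype V] [DecidableEq V]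
    (ℓ k : ℕ) (hk : 1 ≤ k)
    (P : Fin ℓ → Finset V) (hne : ∀ i, (P i).Nonempty)
    (hdisj : ∀ i j, i ≠ j → Disjoint (P i) (P j))
    (hcover : univ.biUnion P = univ)
    (OPTi : Fin ℓ → ℝ)
    (hOPTi : ∀ i, IsLeast {r : ℝ | ∃ T : Finset V, T ⊆ P i ∧ T.Nonempty ∧ T.card ≤ k ∧
      r = ∑ x ∈ P i, Metric.infDist x (T : Set V)} (OPTi i))
    (OPT : ℝ)
    (hOPT : IsLeast {r : ℝ | ∃ T : Finset V, T.Nonempty ∧ T.card ≤ k ∧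
      r = ∑ x : V, Metric.infDist x (T : Set V)} OPT) :
    ∑ i, OPTi i ≤ 2 * OPT :=
  stmt9_general ℓ k P hne hdisj hcover OPTi hOPTi OPT hOPT
end
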